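/- arXiv:1309.1596 — 2 statements merged into one kernel-verified Lean document; each statement's English description precedes it below -/
import Mathlib

section
/- Let q = p^k be a power of a prime p and let (C_x)_{x∈𝒳} be a random code in 𝔽_q^n that is ε-almost dual universal₂ with minimum dimension t, i.e., dim C_x ≥ t for all x and Pr_X[y ∈ C_X^⊥] ≤ ε·q^{−t} for every y ∈ 𝔽_q^n ∖ {0}. Then the ensemble (W_{C_x})_{x∈𝒳}, where W_{C_x} is uniformly distributed on C_x, is √(ε·q^{−t})-biased: for every y ∈ 𝔽_q^n ∖ {0}, E_X |E_{W_{C_X}} ω_p^{(y·W_{C_X})}|² ≤ ε·q^{−t}. -/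
open Real Finset Filter

attribute [local instance] Classical.propDecidable

namespace Hayashi

def IsSubDist {S : Type*} [Fintype S] (P : S → ℝ) : Prop :=
  (∀ x, 0 ≤ P x) ∧ ∑ x, P x ≤ 1

def IsDist {S : Type*} [Fintype S] (P : S → ℝ) : Prop :=
  (∀ x, 0 ≤ P x) ∧ ∑ x, P x = 1

variable {A E : Type*} [Fintype A] [Fintype E]

noncomputable def margE (P : A × E → ℝ) (e : E) : ℝ := ∑ a, P (a, e)

noncomputable def margNorm (P : A × E → ℝ) (e : E) : ℝ := margE P e / ∑ e', margE P e'

noncomputable def l1 (P P' : A × E → ℝ) : ℝ := ∑ a, ∑ e, |P (a, e) - P' (a, e)|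

noncomputable def eta (x y : ℝ) : ℝ := -x * Real.log x + x * y

noncomputable def condRenyi (P : A × E → ℝ) (Q : E → ℝ) (s : ℝ) : ℝ :=
  (-1 / s) * Real.log (∑ a, ∑ e, P (a, e) ^ (1 + s) * Q e ^ (-s))

noncomputable def condRenyiUp (P : A × E → ℝ) (s : ℝ) : ℝ :=
  sSup {x | ∃ Q : E → ℝ, IsDist Q ∧ (∀ e, 0 < Q e) ∧ x = condRenyi P Q s}

noncomputable def condRenyiDown (P : A × E → ℝ) (s : ℝ) : ℝ :=
  condRenyi P (margNorm P) s

noncomputable def condEnt (P : A × E → ℝ) : ℝ :=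
  -∑ a, ∑ e, P (a, e) * Real.log (P (a, e) / margE P e)

noncomputable def H2cond (P : A × E → ℝ) (Q : E → ℝ) : ℝ :=
  -Real.log (∑ a, ∑ e, P (a, e) ^ 2 / Q e)

noncomputable def d2cond (P : A × E → ℝ) (Q : E → ℝ) : ℝ :=
  ∑ a, ∑ e, (P (a, e) - margE P e / (Fintype.card A : ℝ)) ^ 2 / Q e

noncomputable def d1' (P : A × E → ℝ) : ℝ :=
  ∑ a, ∑ e, |P (a, e) - margE P e / (Fintype.card A : ℝ)|

noncomputable def Iprime (P : A × E → ℝ) : ℝ :=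
  ∑ a, ∑ e, P (a, e) * Real.log (P (a, e) * (Fintype.card A : ℝ) / margE P e)

noncomputable def Hmin (P : A × E → ℝ) (Q : E → ℝ) : ℝ :=
  -Real.log (sSup {r | ∃ a e, 0 < Q e ∧ r = P (a, e) / Q e})

noncomputable def D2div {E : Type*} [Fintype E] (P Q : E → ℝ) : ℝ :=
  Real.log (∑ e, P e ^ 2 / Q e)

noncomputable def pushHash {B : Type*} (f : A → B) (P : A × E → ℝ) : B × E → ℝ :=
  fun be => ∑ a, (if f a = be.1 then P (a, be.2) else 0)

noncomputable def Delta_d2 (M ε : ℝ) (P : A × E → ℝ) : ℝ :=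
  sInf {x | ∃ (Q : E → ℝ) (P' : A × E → ℝ), IsDist Q ∧ (∀ e, 0 < Q e) ∧ IsSubDist P' ∧
    x = 2 * l1 P P' + Real.sqrt ε * Real.sqrt M * Real.exp (-H2cond P' Q / 2)}

noncomputable def Delta_I2 (M ε : ℝ) (P : A × E → ℝ) : ℝ :=
  sInf {x | ∃ P' : A × E → ℝ, IsSubDist P' ∧ (∀ e, margE P' e ≤ margE P e) ∧
    x = eta (l1 P P') (Real.log M) + ε * M * Real.exp (-H2cond P' (margE P))}

noncomputable def Delta_dmin (M ε : ℝ) (P : A × E → ℝ) : ℝ :=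
  sInf {x | ∃ (Q : E → ℝ) (P' : A × E → ℝ), IsDist Q ∧ (∀ e, 0 < Q e) ∧ IsSubDist P' ∧
    x = 2 * l1 P P' + Real.sqrt ε * Real.sqrt M * Real.exp (-Hmin P' Q / 2)}

noncomputable def Delta_Imin (M ε : ℝ) (P : A × E → ℝ) : ℝ :=
  sInf {x | ∃ P' : A × E → ℝ, IsSubDist P' ∧ (∀ e, margE P' e ≤ margE P e) ∧
    x = eta (l1 P P') (Real.log M) + ε * M * Real.exp (-Hmin P' (margE P))}

noncomputable def DeltaBar_Imin (M ε : ℝ) (P : A × E → ℝ) : ℝ :=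
  sInf {x | ∃ P' : A × E → ℝ, IsSubDist P' ∧ (∀ e, margE P' e ≤ margE P e) ∧
    x = eta (l1 P P') (Real.log M) + Real.log (1 + ε * M * Real.exp (-Hmin P' (margE P)))}

noncomputable def Pn (P : A × E → ℝ) (n : ℕ) : (Fin n → A) × (Fin n → E) → ℝ :=
  fun ae => ∏ i, P (ae.1 i, ae.2 i)

noncomputable def omg (p : ℕ) (t : ZMod p) : ℂ :=
  Complex.exp (2 * Real.pi * Complex.I * (t.val : ℂ) / (p : ℂ))

noncomputable def unifOn {n : ℕ} {F : Type*} [Field F] [Fintype F]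
    (C : Submodule F (Fin n → F)) : (Fin n → F) → ℝ :=
  fun w => if w ∈ C then (Nat.card C : ℝ)⁻¹ else 0

/-!
The character sum `E_{W_C} ω^{y·W_C}` is the average over the group `C` of the additive
character `w ↦ ω^{y·w}`, so it equals `1` if `y ∈ C^⊥` and `0` otherwise. Hence
`E_X |E_{W_{C_X}} ω^{y·W_{C_X}}|² = Pr_X[y ∈ C_X^⊥]`, which is at most `ε q^{-t}` by hypothesis.
-/

lemma omg_eq_stdAddChar (p : ℕ) [NeZero p] (t : ZMod p) : omg p t = ZMod.stdAddChar t := by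
  rw [ZMod.stdAddChar_apply, ZMod.toCircle_apply, omg]

lemma sum_stdAddChar_comp_eq_ite {G : Type*} [AddGroup G] [Fintype G] {N : ℕ} [NeZero N]
    (f : G →+ ZMod N) :
    ∑ g, ZMod.stdAddChar (f g) = if ∀ g, f g = 0 then (Fintype.card G : ℂ) else 0 := by
  have htriv : ZMod.stdAddChar.compAddMonoidHom f = 0 ↔ ∀ g, f g = 0 := by
    simp only [AddChar.eq_zero_iff, AddChar.compAddMonoidHom_apply,
      ← (ZMod.stdAddChar (N := N)).map_zero_eq_one, ZMod.injective_stdAddChar.eq_iff]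
  have hsum := AddChar.sum_eq_ite (ZMod.stdAddChar.compAddMonoidHom f)
  simp only [htriv] at hsum
  exact hsum

lemma sum_unifOn_mul {n : ℕ} {F : Type*} [Field F] [Fintype F] (C : Submodule F (Fin n → F))
    (g : (Fin n → F) → ℂ) :
    ∑ w, (unifOn C w : ℂ) * g w = (Nat.card C : ℂ)⁻¹ * ∑ w : C, g w := by
  simp only [unifOn, apply_ite Complex.ofReal, ite_mul, Complex.ofReal_zero, zero_mul,
    Complex.ofReal_inv, Complex.ofReal_natCast]
  rw [← sum_filter, sum_subtype _ (fun w => mem_filter_univ w), mul_sum]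

lemma sum_unifOn_mul_stdAddChar {n N : ℕ} [NeZero N] {F : Type*} [Field F] [Fintype F]
    (C : Submodule F (Fin n → F)) (f : (Fin n → F) →+ ZMod N) :
    ∑ w, (unifOn C w : ℂ) * ZMod.stdAddChar (f w) = if ∀ c ∈ C, f c = 0 then 1 else 0 := by
  have hcard : (Nat.card C : ℂ) ≠ 0 := Nat.cast_ne_zero.mpr Nat.card_pos.ne'
  have hsum := sum_stdAddChar_comp_eq_ite (f.comp C.subtype.toAddMonoidHom)
  simp only [AddMonoidHom.comp_apply, LinearMap.toAddMonoidHom_coe, Submodule.coe_subtype,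
    Subtype.forall, ← Nat.card_eq_fintype_card] at hsum
  rw [sum_unifOn_mul, hsum]
  split_ifs
  · exact inv_mul_cancel₀ hcard
  · exact mul_zero _

theorem statement4_general
    (p n q : ℕ) [Fact p.Prime]
    (F : Type*) [Field F] [Fintype F]
    (B : F → F → ZMod p)
    (hB2 : ∀ x y z : F, B x (y + z) = B x y + B x z)
    (X : Type*) [Fintype X] (μ : X → ℝ)
    (C : X → Submodule F (Fin n → F)) (t : ℕ) (ε : ℝ)
    (hdual : ∀ y : Fin n → F, y ≠ 0 →
      (∑ x, (if ∀ c ∈ C x, (∑ j, B (y j) (c j)) = 0 then μ x else 0)) ≤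
        ε / (q : ℝ) ^ t) :
    ∀ y : Fin n → F, y ≠ 0 →
      ∑ x, μ x *
          Complex.normSq (∑ w, (unifOn (C x) w : ℂ) * omg p (∑ j, B (y j) (w j))) ≤
        ε / (q : ℝ) ^ t := by
  intro y hy
  let pairing : (Fin n → F) →+ ZMod p :=
    AddMonoidHom.mk' (fun w => ∑ j, B (y j) (w j)) fun u v => by
      simp only [Pi.add_apply, hB2, sum_add_distrib]
  have hterm : ∀ x, μ x * Complex.normSq
      (∑ w, (unifOn (C x) w : ℂ) * omg p (∑ j, B (y j) (w j))) =
        if ∀ c ∈ C x, (∑ j, B (y j) (c j)) = 0 then μ x else 0 := fun x => by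
    have hmean : ∑ w, (unifOn (C x) w : ℂ) * omg p (∑ j, B (y j) (w j)) =
        if ∀ c ∈ C x, (∑ j, B (y j) (c j)) = 0 then 1 else 0 := by
      simp only [omg_eq_stdAddChar]
      exact sum_unifOn_mul_stdAddChar (C x) pairing
    rw [hmean]
    split_ifs <;> simp
  simpa only [hterm] using hdual y hy

/-- Lemma `Lem6-0` of the paper: an `ε`-almost dual universal₂ random code with
minimum dimension `t` yields, via uniform distributions on the codes, a
`√(ε·q^{-t})`-biased ensemble of random variables on `𝔽_q^n`. -/
theorem statement4
    (p k n q : ℕ) [Fact p.Prime] (hk : 0 < k) (hq : q = p ^ k)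
    (F : Type*) [Field F] [Fintype F] (hF : Fintype.card F = q)
    (B : F → F → ZMod p)
    (hB1 : ∀ x y z : F, B (x + y) z = B x z + B y z)
    (hB2 : ∀ x y z : F, B x (y + z) = B x y + B x z)
    (hBl : ∀ x : F, (∀ y, B x y = 0) → x = 0)
    (hBr : ∀ y : F, (∀ x, B x y = 0) → y = 0)
    (X : Type*) [Fintype X] (μ : X → ℝ) (hμ : IsDist μ)
    (C : X → Submodule F (Fin n → F)) (t : ℕ) (ε : ℝ)
    (hdim : ∀ x, t ≤ Module.finrank F (C x))
    (hdual : ∀ y : Fin n → F, y ≠ 0 →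
      (∑ x, (if ∀ c ∈ C x, (∑ j, B (y j) (c j)) = 0 then μ x else 0)) ≤
        ε / (q : ℝ) ^ t) :
    ∀ y : Fin n → F, y ≠ 0 →
      ∑ x, μ x *
          Complex.normSq (∑ w, (unifOn (C x) w : ℂ) * omg p (∑ j, B (y j) (w j))) ≤
        ε / (q : ℝ) ^ t :=
  statement4_general p n q F B hB2 X μ C t ε hdual

end Hayashi
end

section
/- For every joint sub-distribution P_{A,E} on 𝒜 × ℰ, every M ≥ 1, every ε > 0, and every s ∈ (0, 1/2], Δ_{d,2}(M,ε|P_{A,E}) ≤ (2 + √ε)·M^s·e^{−s·H^↑_{1/(1−s)}(A|E|P_{A,E})}. -/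
/-!
Fix a full-support distribution `Q` on `ℰ`, put `t = s / (1 - s)` and `T = ∑ P^{1+t} Q^{-t}`, so
that `e^{-s H_{1+t}(A|E|P‖Q)} = T^{1-s}`. Truncating `P` at `c · Q(e)` removes at most
`c^{-t} T` of mass, and since `t ≤ 1` (i.e. `s ≤ 1/2`) the collision sum `∑ P'^2 / Q` of the
truncation is at most `c^{1-t} T`. The choice `c = (T / M)^{1-s}` makes both error terms equal to
`M^s T^{1-s}`; the supremum over `Q` follows because the bound is antitone in the entropy.

For `P = 0` the truncation vanishes and `H₂` of the zero sub-distribution is the junk value `0`;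
there `Δ_{d,2} = 0` is approached instead by `δ · (point mass ⊗ Q)` with `δ → 0`.
-/

open Real Finset Filter

attribute [local instance] Classical.propDecidable

namespace Hayashi

variable {A E : Type*} [Fintype A] [Fintype E]

lemma sub_min_le_rpow {p q t : ℝ} (hp : 0 ≤ p) (hq : 0 < q) (ht : 0 ≤ t) :
    p - min p q ≤ p ^ (1 + t) * q ^ (-t) := by
  rcases le_or_gt p q with hpq | hqp
  · rw [min_eq_left hpq, sub_self]
    positivity
  · have hp' : 0 < p := hq.trans hqp
    calc p - min p q ≤ p := by linarith [le_min hp hq.le]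
      _ = p ^ (1 + t) * p ^ (-t) := by rw [← rpow_add hp']; norm_num
      _ ≤ p ^ (1 + t) * q ^ (-t) := by
        gcongr ?_ * ?_
        exact rpow_le_rpow_of_nonpos hq hqp.le (neg_nonpos.2 ht)

lemma min_sq_le_rpow {p q t : ℝ} (hp : 0 ≤ p) (hq : 0 ≤ q) (ht0 : 0 ≤ t) (ht1 : t ≤ 1) :
    min p q ^ 2 ≤ p ^ (1 + t) * q ^ (1 - t) := by
  have hm : 0 ≤ min p q := le_min hp hq
  calc min p q ^ 2 = min p q ^ (1 + t) * min p q ^ (1 - t) := by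
        rw [← rpow_add' hm (by linarith)]; norm_num
    _ ≤ p ^ (1 + t) * q ^ (1 - t) := by
        gcongr
        exacts [min_le_left _ _, min_le_right _ _]

lemma le_mul_exp_neg_mul_csSup {S : Set ℝ} (hS : S.Nonempty) {C D s : ℝ} (hC : 0 < C)
    (hs : 0 < s) (h : ∀ x ∈ S, D ≤ C * exp (-(s * x))) : D ≤ C * exp (-(s * sSup S)) := by
  rcases le_or_gt D 0 with hD | hD
  · exact hD.trans (by positivity)
  have hiff : ∀ x, D ≤ C * exp (-(s * x)) ↔ x ≤ log (C / D) / s := fun x => by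
    rw [le_div_iff₀ hs, le_log_iff_exp_le (div_pos hC hD), le_div_iff₀ hD, exp_neg,
      ← div_eq_mul_inv, le_div_iff₀ (exp_pos _), mul_comm x, mul_comm D]
  exact (hiff _).2 (csSup_le hS fun x hx => (hiff x).1 (h x hx))

noncomputable def renyiSum (P : A × E → ℝ) (Q : E → ℝ) (t : ℝ) : ℝ :=
  ∑ a, ∑ e, P (a, e) ^ (1 + t) * Q e ^ (-t)

noncomputable def truncate (P : A × E → ℝ) (c : ℝ) (Q : E → ℝ) : A × E → ℝ :=
  fun x => min (P x) (c * Q x.2)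

lemma exists_isDist_pos [Nonempty E] : ∃ Q : E → ℝ, IsDist Q ∧ ∀ e, 0 < Q e :=
  ⟨fun _ => (Fintype.card E : ℝ)⁻¹, ⟨fun _ => by positivity, by simp⟩, fun _ => by positivity⟩

lemma l1_nonneg (P P' : A × E → ℝ) : 0 ≤ l1 P P' :=
  sum_nonneg fun _ _ => sum_nonneg fun _ _ => abs_nonneg _

lemma Delta_d2_le {M ε : ℝ} {P P' : A × E → ℝ} {Q : E → ℝ} (hQ : IsDist Q)
    (hQpos : ∀ e, 0 < Q e) (hP' : IsSubDist P') :
    Delta_d2 M ε P ≤ 2 * l1 P P' + √ε * √M * exp (-H2cond P' Q / 2) := by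
  refine csInf_le ⟨0, ?_⟩ ⟨Q, P', hQ, hQpos, hP', rfl⟩
  rintro _ ⟨Q, P', -, -, -, rfl⟩
  exact add_nonneg (mul_nonneg zero_le_two (l1_nonneg P P')) (by positivity)

lemma exp_neg_H2cond_div_two {P : A × E → ℝ} {Q : E → ℝ}
    (h : 0 < ∑ a, ∑ e, P (a, e) ^ 2 / Q e) :
    exp (-H2cond P Q / 2) = √(∑ a, ∑ e, P (a, e) ^ 2 / Q e) := by
  rw [H2cond, neg_neg, exp_half, exp_log h]

section

variable {P : A × E → ℝ} {Q : E → ℝ} {c t : ℝ}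

lemma l1_truncate_le (hP : ∀ x, 0 ≤ P x) (hQ : ∀ e, 0 < Q e) (hc : 0 < c) (ht : 0 ≤ t) :
    l1 P (truncate P c Q) ≤ c ^ (-t) * renyiSum P Q t := by
  simp only [l1, renyiSum, mul_sum]
  refine sum_le_sum fun a _ => sum_le_sum fun e _ => ?_
  calc |P (a, e) - truncate P c Q (a, e)| = P (a, e) - min (P (a, e)) (c * Q e) :=
        abs_of_nonneg (sub_nonneg.2 (min_le_left _ _))
    _ ≤ P (a, e) ^ (1 + t) * (c * Q e) ^ (-t) := sub_min_le_rpow (hP _) (mul_pos hc (hQ e)) ht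
    _ = c ^ (-t) * (P (a, e) ^ (1 + t) * Q e ^ (-t)) := by
        rw [mul_rpow hc.le (hQ e).le]; ring

lemma sum_sq_truncate_le (hP : ∀ x, 0 ≤ P x) (hQ : ∀ e, 0 < Q e) (hc : 0 < c) (ht0 : 0 ≤ t)
    (ht1 : t ≤ 1) :
    ∑ a, ∑ e, truncate P c Q (a, e) ^ 2 / Q e ≤ c ^ (1 - t) * renyiSum P Q t := by
  simp only [renyiSum, mul_sum]
  refine sum_le_sum fun a _ => sum_le_sum fun e _ => ?_
  have hQe : Q e ^ (1 - t) = Q e ^ (-t) * Q e := by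
    rw [← rpow_add_one (hQ e).ne']; ring_nf
  rw [div_le_iff₀ (hQ e)]
  calc truncate P c Q (a, e) ^ 2 ≤ P (a, e) ^ (1 + t) * (c * Q e) ^ (1 - t) :=
        min_sq_le_rpow (hP _) (mul_pos hc (hQ e)).le ht0 ht1
    _ = c ^ (1 - t) * (P (a, e) ^ (1 + t) * Q e ^ (-t)) * Q e := by
        rw [mul_rpow hc.le (hQ e).le, hQe]; ring

lemma renyiSum_pos (hP : ∀ x, 0 ≤ P x) (hQ : ∀ e, 0 < Q e) {x : A × E} (hx : 0 < P x) :
    0 < renyiSum P Q t := by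
  rw [renyiSum, ← Fintype.sum_prod_type']
  have := hQ x.2
  refine sum_pos' (fun y _ => ?_) ⟨x, mem_univ _, by positivity⟩
  have := hP y
  have := hQ y.2
  positivity

lemma sum_sq_truncate_pos (hQ : ∀ e, 0 < Q e) (hc : 0 < c) {x : A × E} (hx : 0 < P x) :
    0 < ∑ a, ∑ e, truncate P c Q (a, e) ^ 2 / Q e := by
  rw [← Fintype.sum_prod_type']
  have := hQ x.2
  refine sum_pos' (fun y _ => ?_) ⟨x, mem_univ _, ?_⟩
  · have := hQ y.2
    positivity
  · have : 0 < truncate P c Q x := lt_min hx (by positivity)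
    positivity

lemma Delta_d2_le_of_truncate {M ε : ℝ} (hM : 0 ≤ M) (hP : IsSubDist P) (hQ : IsDist Q)
    (hQpos : ∀ e, 0 < Q e) (hc : 0 < c) (ht0 : 0 ≤ t) (ht1 : t ≤ 1) {x : A × E} (hx : 0 < P x) :
    Delta_d2 M ε P ≤
      2 * (c ^ (-t) * renyiSum P Q t) + √ε * √(M * (c ^ (1 - t) * renyiSum P Q t)) := by
  have hP' : IsSubDist (truncate P c Q) :=
    ⟨fun y => le_min (hP.1 y) (mul_pos hc (hQpos y.2)).le,
      (sum_le_sum fun y _ => min_le_left _ _).trans hP.2⟩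
  have hS := sum_sq_truncate_pos hQpos hc hx
  calc Delta_d2 M ε P
      ≤ 2 * l1 P (truncate P c Q) + √ε * √M * exp (-H2cond (truncate P c Q) Q / 2) :=
        Delta_d2_le hQ hQpos hP'
    _ = 2 * l1 P (truncate P c Q) +
          √ε * √(M * ∑ a, ∑ e, truncate P c Q (a, e) ^ 2 / Q e) := by
        rw [exp_neg_H2cond_div_two hS, mul_assoc, sqrt_mul' _ hS.le]
    _ ≤ _ := by
        gcongr
        · exact l1_truncate_le hP.1 hQpos hc ht0
        · exact sum_sq_truncate_le hP.1 hQpos hc ht0 ht1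

lemma exp_neg_mul_condRenyi {s : ℝ} (hs0 : 0 < s) (hs1 : s < 1)
    (hT : 0 < renyiSum P Q (s / (1 - s))) :
    exp (-(s * condRenyi P Q (s / (1 - s)))) = renyiSum P Q (s / (1 - s)) ^ (1 - s) := by
  rw [rpow_def_of_pos hT, condRenyi, ← renyiSum]
  have : 1 - s ≠ 0 := by linarith
  congr 1
  field_simp

lemma Delta_d2_le_condRenyi {M ε s : ℝ} (hP : IsSubDist P) {x : A × E} (hx : 0 < P x)
    (hQ : IsDist Q) (hQpos : ∀ e, 0 < Q e) (hM : 0 < M) (hs0 : 0 < s) (hs1 : s ≤ 1 / 2) :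
    Delta_d2 M ε P ≤ (2 + √ε) * M ^ s * exp (-(s * condRenyi P Q (s / (1 - s)))) := by
  have hs1' : 0 < 1 - s := by linarith
  have ht0 : 0 ≤ s / (1 - s) := by positivity
  have ht1 : s / (1 - s) ≤ 1 := by rw [div_le_one hs1']; linarith
  have hT : 0 < renyiSum P Q (s / (1 - s)) := renyiSum_pos hP.1 hQpos hx
  rw [exp_neg_mul_condRenyi hs0 (by linarith) hT]
  obtain ⟨a, rfl⟩ : ∃ a, M = exp a := ⟨log M, (exp_log hM).symm⟩
  obtain ⟨b, hb⟩ : ∃ b, renyiSum P Q (s / (1 - s)) = exp b := ⟨_, (exp_log hT).symm⟩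
  -- `c = (T / M) ^ (1 - s)` makes both error terms equal to `M ^ s * T ^ (1 - s)`
  have key := Delta_d2_le_of_truncate (ε := ε) hM.le hP hQ hQpos
    (exp_pos ((1 - s) * (b - a))) ht0 ht1 hx
  have h1 : exp ((1 - s) * (b - a)) ^ (-(s / (1 - s))) * exp b = exp a ^ s * exp b ^ (1 - s) := by
    simp only [← exp_mul, ← exp_add]
    congr 1
    field_simp
    ring
  have h2 : √(exp a * (exp ((1 - s) * (b - a)) ^ (1 - s / (1 - s)) * exp b)) =
      exp a ^ s * exp b ^ (1 - s) := by
    simp only [← exp_mul, ← exp_add, ← exp_half]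
    congr 1
    field_simp
    ring
  rw [hb] at key ⊢
  rw [h1, h2] at key
  exact key.trans_eq (by ring)

end

section

variable [Nonempty A] [Nonempty E]

lemma Delta_d2_zero_le (M ε : ℝ) {δ : ℝ} (hδ0 : 0 < δ) (hδ1 : δ ≤ 1) :
    Delta_d2 M ε (0 : A × E → ℝ) ≤ δ * (2 + √ε * √M) := by
  obtain ⟨Q, hQ, hQpos⟩ := exists_isDist_pos (E := E)
  obtain ⟨a₀⟩ := ‹Nonempty A›
  let P' : A × E → ℝ := fun x => (if x.1 = a₀ then δ else 0) * Q x.2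
  have hP'0 : ∀ x, 0 ≤ P' x := fun x => by
    have := hQpos x.2
    positivity
  have hsum : ∑ a, ∑ e, P' (a, e) = δ := by simp [P', ← mul_sum, hQ.2]
  have hl1 : l1 0 P' = δ := by
    simpa only [l1, Pi.zero_apply, zero_sub, abs_neg, abs_of_nonneg (hP'0 _)] using hsum
  have hsq : ∑ a, ∑ e, P' (a, e) ^ 2 / Q e = δ ^ 2 := by
    have : ∀ a e, P' (a, e) ^ 2 / Q e = (if a = a₀ then δ ^ 2 else 0) * Q e := fun a e => by
      have := (hQpos e).ne'
      rw [div_eq_iff this]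
      simp only [P']
      split_ifs <;> ring
    simp [this, ← mul_sum, hQ.2]
  have hP' : IsSubDist P' := ⟨hP'0, by rw [Fintype.sum_prod_type, hsum]; exact hδ1⟩
  calc Delta_d2 M ε 0 ≤ 2 * l1 0 P' + √ε * √M * exp (-H2cond P' Q / 2) :=
        Delta_d2_le hQ hQpos hP'
    _ = δ * (2 + √ε * √M) := by
        rw [hl1, exp_neg_H2cond_div_two (by rw [hsq]; positivity), hsq, sqrt_sq hδ0.le]
        ring

lemma Delta_d2_zero_nonpos (M ε : ℝ) : Delta_d2 M ε (0 : A × E → ℝ) ≤ 0 := by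
  have hK : 0 < 2 + √ε * √M := by positivity
  refine le_of_forall_pos_le_add fun η hη => ?_
  calc Delta_d2 M ε 0 ≤ min 1 (η / (2 + √ε * √M)) * (2 + √ε * √M) :=
        Delta_d2_zero_le M ε (lt_min one_pos (by positivity)) (min_le_left _ _)
    _ ≤ η / (2 + √ε * √M) * (2 + √ε * √M) := by gcongr; exact min_le_right _ _
    _ = 0 + η := by field_simp; ring

end

theorem statement11_general {A E : Type*} [Fintype A] [Fintype E] [Nonempty A] [Nonempty E]
    (P : A × E → ℝ) (hP : IsSubDist P)
    (M ε s : ℝ) (hM : 1 ≤ M) (hs : s ∈ Set.Ioc (0 : ℝ) (1 / 2)) :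
    Delta_d2 M ε P ≤
      (2 + Real.sqrt ε) * M ^ s *
        Real.exp (-(s * condRenyiUp P (s / (1 - s)))) := by
  obtain ⟨hs0, hs1⟩ := hs
  have hMpos : 0 < M := one_pos.trans_le hM
  have hC : 0 < (2 + √ε) * M ^ s := by positivity
  by_cases hPpos : ∃ x, 0 < P x
  · obtain ⟨x, hx⟩ := hPpos
    obtain ⟨Q₀, hQ₀, hQ₀pos⟩ := exists_isDist_pos (E := E)
    refine le_mul_exp_neg_mul_csSup ?_ hC hs0 ?_
    · exact ⟨_, Q₀, hQ₀, hQ₀pos, rfl⟩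
    · rintro _ ⟨Q, hQ, hQpos, rfl⟩
      exact Delta_d2_le_condRenyi hP hx hQ hQpos hMpos hs0 hs1
  · obtain rfl : P = 0 := funext fun x => le_antisymm (not_lt.1 fun h => hPpos ⟨x, h⟩) (hP.1 x)
    exact (Delta_d2_zero_nonpos M ε).trans (by positivity)

/-- Lemma `Lem11` of the paper:
`Δ_{d,2}(M,ε|P) ≤ (2+√ε)·M^s·e^{-s·H^↑_{1/(1-s)}(A|E|P)}` for `s ∈ (0,1/2]`. -/
theorem statement11 {A E : Type*} [Fintype A] [Fintype E] [Nonempty A] [Nonempty E]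
    (P : A × E → ℝ) (hP : IsSubDist P)
    (M ε s : ℝ) (hM : 1 ≤ M) (hε : 0 < ε) (hs : s ∈ Set.Ioc (0 : ℝ) (1 / 2)) :
    Delta_d2 M ε P ≤
      (2 + Real.sqrt ε) * M ^ s *
        Real.exp (-(s * condRenyiUp P (s / (1 - s)))) :=
  statement11_general P hP M ε s hM hs

end Hayashi
end
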